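/- As r tends to +∞, η_min(r) converges to b_min := inf_{‖Z‖=1} Σ_{α∈Δ⁺} m(α)·|α(Z)| (the constant b_min(G/K) of Remark 1.1). -/

import Mathlib

/-!
Since `|x| ≤ x coth x ≤ |x| + 1`, the function `ρ_r(Z) + (l-1)/r` differs from
`Σ m(α)|α(Z)|` by at most `(Σ m(α) + l - 1)/r`, uniformly in `Z`; and taking the infimum
over the sphere does not increase the uniform distance between two functions.
-/

open Filter Topology Set Finset

namespace Real

theorem le_mul_cosh_div_sinh {t : ℝ} (ht : 0 ≤ t) : t ≤ t * cosh t / sinh t := by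
  rcases ht.eq_or_lt with rfl | ht
  · simp
  rw [le_div_iff₀ (sinh_pos_iff.2 ht)]
  exact mul_le_mul_of_nonneg_left (sinh_lt_cosh t).le ht.le

theorem mul_cosh_div_sinh_le_add_one {t : ℝ} (ht : 0 ≤ t) : t * cosh t / sinh t ≤ t + 1 := by
  rcases ht.eq_or_lt with rfl | ht
  · simp
  rw [div_le_iff₀ (sinh_pos_iff.2 ht)]
  -- `t (cosh t - sinh t) = t e^{-t} ≤ sinh t` is `2t + 1 ≤ e^{2t}`
  have hexp : 2 * t + 1 ≤ exp t * exp t := by rw [← exp_add, ← two_mul]; exact add_one_le_exp _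
  have hinv : exp (-t) * exp t = 1 := by rw [← exp_add, neg_add_cancel, exp_zero]
  rw [sinh_eq, cosh_eq]
  nlinarith [exp_pos t, exp_pos (-t)]

theorem abs_mul_cosh_abs_div_sinh_abs (x : ℝ) :
    |x| * cosh |x| / sinh |x| = x * cosh x / sinh x := by
  rcases abs_choice x with h | h <;> rw [h]
  rw [cosh_neg, sinh_neg, neg_mul, neg_div_neg_eq]

theorem abs_mul_cosh_div_sinh_sub_abs_le_one (x : ℝ) : |x * cosh x / sinh x - (|x|)| ≤ 1 := by
  rw [← abs_mul_cosh_abs_div_sinh_abs, abs_sub_le_iff]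
  constructor
  · linarith [mul_cosh_div_sinh_le_add_one (abs_nonneg x)]
  · linarith [le_mul_cosh_div_sinh (abs_nonneg x)]

end Real

theorem abs_ciInf_sub_ciInf_le {ι : Sort*} [Nonempty ι] {f g : ι → ℝ} (hf : BddBelow (range f))
    {ε : ℝ} (h : ∀ i, |g i - f i| ≤ ε) : |(⨅ i, g i) - ⨅ i, f i| ≤ ε := by
  have hg : BddBelow (range g) := by
    obtain ⟨b, hb⟩ := hf
    refine ⟨b - ε, forall_mem_range.2 fun i => ?_⟩
    linarith [hb (mem_range_self i), (abs_le.1 (h i)).1]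
  rw [abs_sub_le_iff]
  constructor
  · have := le_ciInf_add (a := ⨅ i, g i) fun i =>
      (ciInf_le hg i).trans (show g i ≤ f i + ε by linarith [(abs_le.1 (h i)).2])
    linarith
  · have := le_ciInf_add (a := ⨅ i, f i) fun i =>
      (ciInf_le hf i).trans (show f i ≤ g i + ε by linarith [(abs_le.1 (h i)).1])
    linarith

theorem tendsto_ciInf_of_abs_sub_le {α ι : Type*} [Nonempty ι] {l : Filter α} {F : α → ι → ℝ}
    {f : ι → ℝ} {u : α → ℝ} (hf : BddBelow (range f)) (hFf : ∀ᶠ x in l, ∀ i, |F x i - f i| ≤ u x)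
    (hu : Tendsto u l (𝓝 0)) : Tendsto (fun x => ⨅ i, F x i) l (𝓝 (⨅ i, f i)) := by
  rw [tendsto_iff_dist_tendsto_zero]
  refine squeeze_zero' (Eventually.of_forall fun x => dist_nonneg) ?_ hu
  filter_upwards [hFf] with x hx using abs_ciInf_sub_ciInf_le hf hx

theorem abs_inv_mul_sum_sub_sum_abs_le {ι : Type*} (s : Finset ι) {w a : ι → ℝ}
    (hw : ∀ i ∈ s, 0 ≤ w i) {G : ℝ → ℝ} (hG : ∀ y, |G y - (|y|)| ≤ 1) {r : ℝ} (hr : 0 < r) :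
    |r⁻¹ * ∑ i ∈ s, w i * G (r * a i) - ∑ i ∈ s, w i * (|a i|)| ≤ r⁻¹ * ∑ i ∈ s, w i := by
  have hsplit : r⁻¹ * ∑ i ∈ s, w i * G (r * a i) - ∑ i ∈ s, w i * |a i|
      = r⁻¹ * ∑ i ∈ s, w i * (G (r * a i) - |r * a i|) := by
    rw [mul_sum, mul_sum, ← sum_sub_distrib]
    refine sum_congr rfl fun i _ => ?_
    rw [abs_mul, abs_of_pos hr]
    field_simp
  rw [hsplit, abs_mul, abs_inv, abs_of_pos hr]
  gcongr
  calc |∑ i ∈ s, w i * (G (r * a i) - |r * a i|)|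
      ≤ ∑ i ∈ s, |w i * (G (r * a i) - |r * a i|)| := abs_sum_le_sum_abs _ _
    _ ≤ ∑ i ∈ s, w i := sum_le_sum fun i hi => by
      rw [abs_mul, abs_of_nonneg (hw i hi)]
      exact mul_le_of_le_one_right (hw i hi) (hG _)

theorem etaMin_tendsto_bMin_atTop_general
    (V : Type*) [NormedAddCommGroup V] [InnerProductSpace ℝ V]
    [FiniteDimensional ℝ V] (hl : 2 ≤ Module.finrank ℝ V)
    (Δ : Finset (V →ₗ[ℝ] ℝ))
    (m : (V →ₗ[ℝ] ℝ) → ℝ) (hm : ∀ α ∈ Δ, 0 < m α)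
    (G : ℝ → ℝ) (hG0 : G 0 = 1)
    (hG : ∀ x : ℝ, x ≠ 0 → G x = x * Real.cosh x / Real.sinh x)
    (ηmin : ℝ → ℝ)
    (hηmin : ∀ r : ℝ, 0 < r → ηmin r =
      ⨅ Z : {Z : V // ‖Z‖ = 1},
        ((1 / r) * ∑ α ∈ Δ, m α * G (r * α Z) +
          ((Module.finrank ℝ V : ℝ) - 1) / r))
    (bmin : ℝ)
    (hbmin : bmin = ⨅ Z : {Z : V // ‖Z‖ = 1}, ∑ α ∈ Δ, m α * |α Z|) :
    Tendsto ηmin atTop (nhds bmin) := by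
  set c : ℝ := (Module.finrank ℝ V : ℝ) - 1
  have hGabs : ∀ y, |G y - (|y|)| ≤ 1 := fun y => by
    rcases eq_or_ne y 0 with rfl | hy
    · simp [hG0]
    · rw [hG y hy]; exact Real.abs_mul_cosh_div_sinh_sub_abs_le_one y
  have : Nontrivial V := Module.nontrivial_of_finrank_pos (R := ℝ) (by omega)
  obtain ⟨Z₀, hZ₀⟩ := exists_norm_eq V zero_le_one
  have : Nonempty {Z : V // ‖Z‖ = 1} := ⟨⟨Z₀, hZ₀⟩⟩
  have hbdd : BddBelow (range fun Z : {Z : V // ‖Z‖ = 1} => ∑ α ∈ Δ, m α * |α Z|) :=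
    ⟨0, forall_mem_range.2 fun Z => sum_nonneg fun α hα => by have := hm α hα; positivity⟩
  have hclose : ∀ r > 0, ∀ Z : {Z : V // ‖Z‖ = 1},
      |(1 / r) * ∑ α ∈ Δ, m α * G (r * α Z) + c / r - ∑ α ∈ Δ, m α * (|α Z|)| ≤
        (∑ α ∈ Δ, m α + |c|) / r := fun r hr Z => by
    have hsum := abs_inv_mul_sum_sub_sum_abs_le Δ (a := fun α => α Z)
      (fun α hα => (hm α hα).le) hGabs hr
    calc _ ≤ |(1 / r) * ∑ α ∈ Δ, m α * G (r * α Z) - ∑ α ∈ Δ, m α * (|α Z|)| + |c / r| := by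
          rw [add_sub_right_comm]; exact abs_add_le _ _
      _ ≤ (∑ α ∈ Δ, m α + |c|) / r := by
          rw [one_div, abs_div, abs_of_pos hr, add_div, div_eq_inv_mul (∑ α ∈ Δ, m α)]
          exact add_le_add_left hsum _
  rw [hbmin]
  refine (tendsto_ciInf_of_abs_sub_le hbdd ((eventually_gt_atTop 0).mono hclose)
    (tendsto_const_nhds.div_atTop tendsto_id)).congr' ?_
  filter_upwards [eventually_gt_atTop 0] with r hr using (hηmin r hr).symm

/-- As `r → +∞`, `η_min(r)` converges to
`b_min = inf_{‖Z‖=1} Σ_{α∈Δ⁺} m(α)·|α(Z)|` (Remark 1.1). -/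
theorem etaMin_tendsto_bMin_atTop
    (V : Type*) [NormedAddCommGroup V] [InnerProductSpace ℝ V]
    [FiniteDimensional ℝ V] (hl : 2 ≤ Module.finrank ℝ V)
    (Δ : Finset (V →ₗ[ℝ] ℝ)) (hΔ : Δ.Nonempty) (hΔ0 : ∀ α ∈ Δ, α ≠ 0)
    (m : (V →ₗ[ℝ] ℝ) → ℝ) (hm : ∀ α ∈ Δ, 0 < m α)
    (G : ℝ → ℝ) (hG0 : G 0 = 1)
    (hG : ∀ x : ℝ, x ≠ 0 → G x = x * Real.cosh x / Real.sinh x)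
    (ηmin : ℝ → ℝ)
    (hηmin : ∀ r : ℝ, 0 < r → ηmin r =
      ⨅ Z : {Z : V // ‖Z‖ = 1},
        ((1 / r) * ∑ α ∈ Δ, m α * G (r * α Z) +
          ((Module.finrank ℝ V : ℝ) - 1) / r))
    (bmin : ℝ)
    (hbmin : bmin = ⨅ Z : {Z : V // ‖Z‖ = 1}, ∑ α ∈ Δ, m α * |α Z|) :
    Tendsto ηmin atTop (nhds bmin) :=
  etaMin_tendsto_bMin_atTop_general V hl Δ m hm G hG0 hG ηmin hηmin bmin hbmin
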